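/- Let W > 0, λ > 0, t_C ≥ 0, E_C > 0 and D > t_C·(1 + λ·t_C) be real constants. Let E(s) = (W·s² + E_C)·(1 + λ·(W/s + t_C)), T(s) = (W/s + t_C)·(1 + λ·(W/s + t_C)), let s* be the unique minimizer of E on (0, ∞), and let s₀ = W·(1 + 2λ·t_C + √(4λ·D + 1)) / (2·(D − t_C·(1 + λ·t_C))). Then sₒₚₜ = max(s₀, s*) satisfies T(sₒₚₜ) ≤ D, and for every s > 0 with T(s) ≤ D one has E(sₒₚₜ) ≤ E(s). -/

import Mathlib

/-!
The expected time `T` is strictly decreasing in the speed and `T(s₀) = D`, so the speeds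
meeting the deadline are exactly those `s ≥ s₀`. The expected energy is a positive combination
of `s², s, 1, s⁻¹`, hence convex on `(0, ∞)` and nondecreasing to the right of its minimizer
`s*`; on `[s₀, ∞)` it is therefore minimized at `max s₀ s*`.
-/

open Real Set

theorem ConvexOn.monotoneOn_of_isMinOn {𝕜 β : Type*} [Field 𝕜] [LinearOrder 𝕜]
    [IsStrictOrderedRing 𝕜] [AddCommMonoid β] [LinearOrder β] [IsOrderedAddMonoid β]
    [Module 𝕜 β] [PosSMulStrictMono 𝕜 β] {s : Set 𝕜} {f : 𝕜 → β} {m : 𝕜}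
    (hf : ConvexOn 𝕜 s f) (hm : IsMinOn f s m) (hms : m ∈ s) :
    MonotoneOn f (s ∩ Ici m) := fun a ha b hb hab =>
  calc f a ≤ max (f m) (f b) := hf.le_on_segment hms hb.1 (Icc_subset_segment ⟨ha.2, hab⟩)
    _ = f b := max_eq_right (hm hb.1)

noncomputable section

variable (W lam tC EC : ℝ)

-- The paper's `T(s)`, `E(s)` and `s₀`, with `λ` written `lam`.
def chunkTime (s : ℝ) : ℝ := (W / s + tC) * (1 + lam * (W / s + tC))

def chunkEnergy (s : ℝ) : ℝ := (W * s ^ 2 + EC) * (1 + lam * (W / s + tC))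

def deadlineSpeed (D : ℝ) : ℝ :=
  W * (1 + 2 * lam * tC + √(4 * lam * D + 1)) / (2 * (D - tC * (1 + lam * tC)))

variable {W lam tC EC}

theorem chunkTime_strictAntiOn (hW : 0 < W) (hlam : 0 ≤ lam) (htC : 0 ≤ tC) :
    StrictAntiOn (chunkTime W lam tC) (Ioi 0) := by
  intro a ha b hb hab
  have ha : 0 < a := ha
  have hb : 0 < b := hb
  have hlt : W / b + tC < W / a + tC := by gcongr
  exact mul_lt_mul hlt (by gcongr) (by positivity) (by positivity)

theorem deadlineSpeed_pos (hW : 0 < W) (hlam : 0 ≤ lam) (htC : 0 ≤ tC) {D : ℝ}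
    (hD : tC * (1 + lam * tC) < D) : 0 < deadlineSpeed W lam tC D := by
  unfold deadlineSpeed
  have : 0 < D - tC * (1 + lam * tC) := by linarith
  positivity

-- `s₀` is chosen so that `W / s₀ + t_C` is the positive root of `x (1 + λ x) = D`.
theorem div_deadlineSpeed_add (hW : 0 < W) (hlam : 0 < lam) (htC : 0 ≤ tC) {D : ℝ}
    (hD : tC * (1 + lam * tC) < D) :
    W / deadlineSpeed W lam tC D + tC = (√(4 * lam * D + 1) - 1) / (2 * lam) := by
  have hD' : 0 < D - tC * (1 + lam * tC) := by linarith
  have hr : √(4 * lam * D + 1) ^ 2 = 4 * lam * D + 1 :=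
    sq_sqrt (by nlinarith [mul_nonneg htC (by positivity : (0 : ℝ) ≤ 1 + lam * tC)])
  have hsum : 0 < 1 + 2 * lam * tC + √(4 * lam * D + 1) := by positivity
  unfold deadlineSpeed
  generalize √(4 * lam * D + 1) = r at hr hsum ⊢
  field_simp
  linear_combination -hr

theorem chunkTime_deadlineSpeed (hW : 0 < W) (hlam : 0 < lam) (htC : 0 ≤ tC) {D : ℝ}
    (hD : tC * (1 + lam * tC) < D) : chunkTime W lam tC (deadlineSpeed W lam tC D) = D := by
  have hr : √(4 * lam * D + 1) ^ 2 = 4 * lam * D + 1 :=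
    sq_sqrt (by nlinarith [mul_nonneg htC (by positivity : (0 : ℝ) ≤ 1 + lam * tC)])
  unfold chunkTime
  rw [div_deadlineSpeed_add hW hlam htC hD]
  generalize √(4 * lam * D + 1) = r at hr ⊢
  field_simp
  linear_combination hr

theorem chunkEnergy_convexOn (hW : 0 ≤ W) (hlam : 0 ≤ lam) (htC : 0 ≤ tC) (hEC : 0 ≤ EC) :
    ConvexOn ℝ (Ioi 0) (chunkEnergy W lam tC EC) := by
  have hconv : Convex ℝ (Ioi (0 : ℝ)) := convex_Ioi 0
  have hsum : ConvexOn ℝ (Ioi 0) (fun s : ℝ => (1 + lam * tC) * W * s ^ (2 : ℤ) +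
      lam * W ^ 2 * s + (1 + lam * tC) * EC + lam * W * EC * s ^ (-1 : ℤ)) :=
    ((((convexOn_zpow 2).smul (by positivity : 0 ≤ (1 + lam * tC) * W)).add
      ((convexOn_id hconv).smul (by positivity : 0 ≤ lam * W ^ 2))).add
      (convexOn_const ((1 + lam * tC) * EC) hconv)).add
      ((convexOn_zpow (-1)).smul (by positivity : 0 ≤ lam * W * EC))
  refine hsum.congr fun s (hs : 0 < s) => ?_
  simp only [chunkEnergy, zpow_neg_one, zpow_two]
  field_simp
  ring

end

theorem stmt_3_general (W lam tC EC D : ℝ) (hW : 0 < W) (hlam : 0 < lam) (htC : 0 ≤ tC)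
    (hEC : 0 < EC) (hD : tC * (1 + lam * tC) < D)
    (sstar : ℝ) (hsstar : 0 < sstar)
    (hmin : ∀ s : ℝ, 0 < s →
      (W * sstar ^ 2 + EC) * (1 + lam * (W / sstar + tC)) ≤
        (W * s ^ 2 + EC) * (1 + lam * (W / s + tC)))
    (s0 sopt : ℝ)
    (hs0 : s0 = W * (1 + 2 * lam * tC + Real.sqrt (4 * lam * D + 1)) /
      (2 * (D - tC * (1 + lam * tC))))
    (hsopt : sopt = max s0 sstar) :
    (W / sopt + tC) * (1 + lam * (W / sopt + tC)) ≤ D ∧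
    ∀ s : ℝ, 0 < s → (W / s + tC) * (1 + lam * (W / s + tC)) ≤ D →
      (W * sopt ^ 2 + EC) * (1 + lam * (W / sopt + tC)) ≤
        (W * s ^ 2 + EC) * (1 + lam * (W / s + tC)) := by
  replace hs0 : s0 = deadlineSpeed W lam tC D := hs0
  subst hsopt
  have hs0pos : 0 < s0 := hs0 ▸ deadlineSpeed_pos hW hlam.le htC hD
  have hT0 : chunkTime W lam tC s0 = D := hs0 ▸ chunkTime_deadlineSpeed hW hlam htC hD
  have hanti := chunkTime_strictAntiOn hW hlam.le htC
  have hsopt : 0 < max s0 sstar := hsstar.trans_le (le_max_right _ _)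
  refine ⟨(hanti.antitoneOn hs0pos hsopt (le_max_left _ _)).trans hT0.le, fun s hs hTs => ?_⟩
  have hs0s : s0 ≤ s := (hanti.le_iff_ge hs hs0pos).1 (hTs.trans hT0.ge)
  rcases max_cases s0 sstar with ⟨hmax, hle⟩ | ⟨hmax, -⟩
  · rw [hmax]
    exact (chunkEnergy_convexOn hW.le hlam.le htC hEC.le).monotoneOn_of_isMinOn
      (isMinOn_iff.2 hmin) hsstar ⟨hs0pos, hle⟩ ⟨hs, hle.trans hs0s⟩ hs0s
  · rw [hmax]
    exact hmin s hs

/-- Single chunk, single speed, expected deadline. With `s*` the unique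
minimizer of the expected energy `E` on `(0, ∞)` and
`s₀ = W (1 + 2 λ t_C + √(4 λ D + 1)) / (2 (D − t_C (1 + λ t_C)))`, the speed
`sₒₚₜ = max(s₀, s*)` meets the expected deadline and minimizes the expected energy
among all speeds `s > 0` meeting it. -/
theorem stmt_3 (W lam tC EC D : ℝ) (hW : 0 < W) (hlam : 0 < lam) (htC : 0 ≤ tC)
    (hEC : 0 < EC) (hD : tC * (1 + lam * tC) < D)
    (sstar : ℝ) (hsstar : 0 < sstar)
    (hmin : ∀ s : ℝ, 0 < s →
      (W * sstar ^ 2 + EC) * (1 + lam * (W / sstar + tC)) ≤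
        (W * s ^ 2 + EC) * (1 + lam * (W / s + tC)))
    (huniq : ∀ s : ℝ, 0 < s →
      (∀ t : ℝ, 0 < t →
        (W * s ^ 2 + EC) * (1 + lam * (W / s + tC)) ≤
          (W * t ^ 2 + EC) * (1 + lam * (W / t + tC))) → s = sstar)
    (s0 sopt : ℝ)
    (hs0 : s0 = W * (1 + 2 * lam * tC + Real.sqrt (4 * lam * D + 1)) /
      (2 * (D - tC * (1 + lam * tC))))
    (hsopt : sopt = max s0 sstar) :
    (W / sopt + tC) * (1 + lam * (W / sopt + tC)) ≤ D ∧
    ∀ s : ℝ, 0 < s → (W / s + tC) * (1 + lam * (W / s + tC)) ≤ D →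
      (W * sopt ^ 2 + EC) * (1 + lam * (W / sopt + tC)) ≤
        (W * s ^ 2 + EC) * (1 + lam * (W / s + tC)) :=
  stmt_3_general W lam tC EC D hW hlam htC hEC hD sstar hsstar hmin s0 sopt hs0 hsopt
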